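/- There is a bijection between the set of Sp_{2k}-ballot tableaux of one-column shape (1^a) and weight δ ∈ {0,1}^k, and the set of ((2k-a-|δ|)/2, (a-|δ|)/2)-ballot sequences over Z(δ) := {i : δᵢ = 0}, where |δ| = Σδᵢ. -/

import Mathlib

/-!
A column has distinct entries, so it is determined by its set of entries. For each `i` the
weight condition leaves three possibilities: `i` and `ī` both occur (`δ i = 0`, `i` marked), only
`i` occurs (`δ i = 1`), or neither occurs (`δ i = 0`, `i` unmarked); hence the entry set is
determined by the marked set `S ⊆ Z(δ)`. Among the letters `≤ ī` there are then
`2 #(S ∩ [1, i]) + #(δ⁻¹ 1 ∩ [1, i])` entries, while `i = #(S ∩ [1, i]) + #(δ⁻¹ 1 ∩ [1, i]) +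
#((Z(δ) \ S) ∩ [1, i])`, so the symplectic column condition at `i` is exactly the ballot
condition for the prefix ending at `i`. The ballot condition of the tableau holds automatically,
because `ī` only occurs together with the smaller entry `i`.
-/

open Finset

lemma List.Pairwise.count_take_le {α : Type*} [Preorder α] [DecidableEq α] {l : List α}
    (hl : l.Pairwise (· < ·)) {x y : α} (hxy : x < y) (hmem : y ∈ l → x ∈ l) (p : ℕ) :
    (l.take p).count y ≤ (l.take p).count x := by
  have hnd : (l.take p).Nodup := (hl.sublist (List.take_sublist p l)).imp ne_of_lt
  by_cases hy : y ∈ l.take p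
  · have hx : x ∈ l.take p := by
      have hxl := hmem (List.mem_of_mem_take hy)
      rw [← List.take_append_drop p l, List.mem_append] at hxl
      rw [← List.take_append_drop p l, List.pairwise_append] at hl
      exact hxl.resolve_right fun h => lt_asymm hxy (hl.2.2 y hy x h)
    rw [List.count_eq_one_of_mem hnd hy, List.count_eq_one_of_mem hnd hx]
  · rw [List.count_eq_zero_of_not_mem hy]
    exact Nat.zero_le _

section ofFn

variable {α : Type*} [DecidableEq α] {a : ℕ} {w : Fin a → α}

lemma List.count_ofFn_of_injective (hw : Function.Injective w) (v : α) :
    (List.ofFn w).count v = if v ∈ univ.image w then 1 else 0 := by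
  rw [← Multiset.coe_count, ← Fin.univ_val_map, ← image_val_of_injOn hw.injOn,
    Multiset.count_eq_of_nodup (univ.image w).nodup]
  simp only [mem_val]

lemma List.countP_ofFn_of_injective (hw : Function.Injective w) (p : α → Prop)
    [DecidablePred p] :
    (List.ofFn w).countP (fun x => decide (p x)) = #((univ.image w).filter p) := by
  rw [← Multiset.coe_countP, ← Fin.univ_val_map, ← image_val_of_injOn hw.injOn,
    Multiset.countP_eq_card_filter, ← filter_val, card_val]

end ofFn

def subtypeStrictMonoEquiv {α : Type*} [LinearOrder α] {a : ℕ} {P : (Fin a → α) → Prop}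
    {Q : Finset α → Prop} (hPQ : ∀ w, StrictMono w → (P w ↔ Q (univ.image w))) :
    {w : Fin a → α // StrictMono w ∧ P w} ≃ {s : Finset α // #s = a ∧ Q s} where
  toFun w := ⟨univ.image w.1, by rw [card_image_of_injective _ w.2.1.injective, card_fin],
    (hPQ _ w.2.1).1 w.2.2⟩
  invFun s := ⟨s.1.orderEmbOfFin s.2.1, (s.1.orderEmbOfFin s.2.1).strictMono,
    (hPQ _ (s.1.orderEmbOfFin s.2.1).strictMono).2 (by rw [image_orderEmbOfFin_univ]; exact s.2.2)⟩
  left_inv w := Subtype.ext (orderEmbOfFin_unique _ (fun t => mem_image_of_mem _ (mem_univ t))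
    w.2.1).symm
  right_inv s := Subtype.ext (image_orderEmbOfFin_univ _ _)

lemma ite_eq_ite_add_iff {P Q : Prop} [Decidable P] [Decidable Q] {d : ℕ} (hd : d ≤ 1) :
    ((if P then 1 else 0) = (if Q then 1 else 0) + d) ↔ ((P ↔ Q ∨ d = 1) ∧ (Q → d = 0)) := by
  by_cases hP : P <;> by_cases hQ : Q <;> simp [hP, hQ] <;> omega

lemma forall_one_le_le_iff_forall_fin {k : ℕ} {P : ℕ → Prop} :
    (∀ n, 1 ≤ n → n ≤ k → P n) ↔ ∀ m : Fin k, P (m + 1) :=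
  ⟨fun h m => h _ (by omega) m.isLt, fun h n h1 h2 => by
    simpa [Nat.sub_add_cancel h1] using h ⟨n - 1, by omega⟩⟩

namespace SpColumn

variable {k : ℕ}

/-- `i : Fin k` indexes the letters `i + 1` and `(i + 1)‾`, encoded as `2i + 1` and `2i + 2`. -/
def letter : Fin k ↪ ℕ := ⟨fun i => 2 * i + 1, fun i j h => Fin.ext (by simp at h; omega)⟩

def barLetter : Fin k ↪ ℕ := ⟨fun i => 2 * i + 2, fun i j h => Fin.ext (by simp at h; omega)⟩

lemma letter_apply (i : Fin k) : letter i = 2 * (i : ℕ) + 1 := rfl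

lemma barLetter_apply (i : Fin k) : barLetter i = 2 * (i : ℕ) + 2 := rfl

lemma barLetter_ne_letter (i j : Fin k) : barLetter i ≠ letter j := by
  rw [letter_apply, barLetter_apply]
  omega

lemma exists_eq_letter_or_eq_barLetter {v : ℕ} (h1 : 1 ≤ v) (h2 : v ≤ 2 * k) :
    ∃ i : Fin k, v = letter i ∨ v = barLetter i :=
  ⟨⟨(v - 1) / 2, by omega⟩, by simp only [letter_apply, barLetter_apply]; omega⟩

lemma ext_of_letter_barLetter {s t : Finset ℕ} (hs : ∀ v ∈ s, 1 ≤ v ∧ v ≤ 2 * k)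
    (ht : ∀ v ∈ t, 1 ≤ v ∧ v ≤ 2 * k) (hl : ∀ i : Fin k, letter i ∈ s ↔ letter i ∈ t)
    (hb : ∀ i : Fin k, barLetter i ∈ s ↔ barLetter i ∈ t) : s = t := by
  have key : ∀ v, 1 ≤ v ∧ v ≤ 2 * k → (v ∈ s ↔ v ∈ t) := by
    rintro v ⟨h1, h2⟩
    obtain ⟨i, rfl | rfl⟩ := exists_eq_letter_or_eq_barLetter h1 h2
    exacts [hl i, hb i]
  ext v
  exact ⟨fun h => (key v (hs v h)).1 h, fun h => (key v (ht v h)).2 h⟩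

def column (S D : Finset (Fin k)) : Finset ℕ := S.map barLetter ∪ (S ∪ D).map letter

variable {S D : Finset (Fin k)}

lemma letter_mem_column {i : Fin k} : letter i ∈ column S D ↔ i ∈ S ∨ i ∈ D := by
  simp [column, barLetter_ne_letter]

lemma barLetter_mem_column {i : Fin k} : barLetter i ∈ column S D ↔ i ∈ S := by
  simp [column, (barLetter_ne_letter _ _).symm]

lemma mem_column_bounds : ∀ v ∈ column S D, 1 ≤ v ∧ v ≤ 2 * k := by
  simp only [column, mem_union, mem_map]
  rintro v (⟨i, -, rfl⟩ | ⟨i, -, rfl⟩) <;>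
    · simp only [letter_apply, barLetter_apply]
      omega

lemma card_column (h : Disjoint S D) : #(column S D) = 2 * #S + #D := by
  have hdisj : Disjoint (S.map barLetter) ((S ∪ D).map letter) :=
    disjoint_left.2 fun v hv hv' => by
      obtain ⟨i, -, rfl⟩ := mem_map.1 hv
      obtain ⟨j, -, hj⟩ := mem_map.1 hv'
      exact barLetter_ne_letter i j hj.symm
  rw [column, card_union_of_disjoint hdisj, card_map, card_map, card_union_of_disjoint h]
  ring

lemma filter_column_le (m : Fin k) :
    (column S D).filter (· ≤ 2 * ((m : ℕ) + 1)) =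
      column (S.filter (· ≤ m)) (D.filter (· ≤ m)) := by
  have hl : ∀ i : Fin k, letter i ≤ 2 * (m + 1) ↔ i ≤ m := fun i => by
    rw [letter_apply, Fin.le_def]; omega
  have hb : ∀ i : Fin k, barLetter i ≤ 2 * (m + 1) ↔ i ≤ m := fun i => by
    rw [barLetter_apply, Fin.le_def]; omega
  simp only [column, filter_union, filter_map, Function.comp_def, hl, hb]

def barred (s : Finset ℕ) : Finset (Fin k) := univ.filter (fun i => barLetter i ∈ s)

lemma mem_barred {s : Finset ℕ} {i : Fin k} : i ∈ barred s ↔ barLetter i ∈ s := by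
  simp [barred]

lemma barred_column : barred (column S D) = S := by
  ext i
  rw [mem_barred, barLetter_mem_column]

def ones (δ : Fin k → ℕ) : Finset (Fin k) := univ.filter (fun i => δ i = 1)

def unmarked (δ : Fin k → ℕ) (S : Finset (Fin k)) : Finset (Fin k) :=
  univ.filter (fun i => δ i = 0 ∧ i ∉ S)

variable {δ : Fin k → ℕ}

lemma sum_eq_card_ones (hδ : ∀ i, δ i ≤ 1) : ∑ i, δ i = #(ones δ) := by
  rw [ones, card_filter]
  exact sum_congr rfl fun i _ => by have := hδ i; split_ifs <;> omega

lemma disjoint_ones (hS : ∀ i ∈ S, δ i = 0) : Disjoint S (ones δ) :=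
  disjoint_left.2 fun i hi hi' => by simp [ones, hS i hi] at hi'

lemma card_filter_le_add_ones_add_unmarked (hδ : ∀ i, δ i ≤ 1) (hS : ∀ i ∈ S, δ i = 0) (m : Fin k) :
    #(S.filter (· ≤ m)) + #((ones δ).filter (· ≤ m)) + #((unmarked δ S).filter (· ≤ m)) =
      m + 1 := by
  have hcover : S ∪ ones δ ∪ unmarked δ S = univ := by
    ext i
    by_cases hi : i ∈ S
    · simp [hi]
    · have := hδ i
      simp [ones, unmarked, hi]
      omega
  have hdisj : Disjoint (S ∪ ones δ) (unmarked δ S) := disjoint_left.2 fun i hi hi' => by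
    simp only [ones, unmarked, mem_union, mem_filter, mem_univ, true_and] at hi hi'
    rcases hi with hi | hi
    · exact hi'.2 hi
    · omega
  rw [← card_union_of_disjoint (disjoint_filter_filter (disjoint_ones hS)), ← filter_union,
    ← card_union_of_disjoint (disjoint_filter_filter hdisj), ← filter_union, hcover,
    filter_ge_eq_Iic, Fin.card_Iic]

lemma card_filter_column_le_iff (hδ : ∀ i, δ i ≤ 1) (hS : ∀ i ∈ S, δ i = 0) (m : Fin k) :
    #((column S (ones δ)).filter (· ≤ 2 * ((m : ℕ) + 1))) ≤ m + 1 ↔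
      #(S.filter (· ≤ m)) ≤ #((unmarked δ S).filter (· ≤ m)) := by
  have := card_filter_le_add_ones_add_unmarked hδ hS m
  rw [filter_column_le, card_column (disjoint_filter_filter (disjoint_ones hS))]
  omega

/-- The entry sets of the one-column tableaux of weight `δ`. -/
structure IsSpColumn (δ : Fin k → ℕ) (s : Finset ℕ) : Prop where
  bounds : ∀ v ∈ s, 1 ≤ v ∧ v ≤ 2 * k
  card_filter_le : ∀ m : Fin k, #(s.filter (· ≤ 2 * ((m : ℕ) + 1))) ≤ m + 1
  letter_mem_iff : ∀ i, letter i ∈ s ↔ barLetter i ∈ s ∨ δ i = 1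
  eq_zero_of_barLetter_mem : ∀ i, barLetter i ∈ s → δ i = 0

lemma isSpColumn_column (hδ : ∀ i, δ i ≤ 1) (hS : ∀ i ∈ S, δ i = 0)
    (hballot : ∀ m, #(S.filter (· ≤ m)) ≤ #((unmarked δ S).filter (· ≤ m))) :
    IsSpColumn δ (column S (ones δ)) where
  bounds := mem_column_bounds
  card_filter_le m := (card_filter_column_le_iff hδ hS m).2 (hballot m)
  letter_mem_iff i := by simp [letter_mem_column, barLetter_mem_column, ones]
  eq_zero_of_barLetter_mem i h := hS i (barLetter_mem_column.1 h)

namespace IsSpColumn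

variable {s : Finset ℕ}

lemma eq_zero_of_mem_barred (hs : IsSpColumn δ s) {i : Fin k} (hi : i ∈ barred s) : δ i = 0 :=
  hs.eq_zero_of_barLetter_mem i (mem_barred.1 hi)

lemma column_barred (hs : IsSpColumn δ s) : column (barred s) (ones δ) = s :=
  ext_of_letter_barLetter mem_column_bounds hs.bounds
    (fun i => by rw [letter_mem_column, mem_barred, hs.letter_mem_iff]; simp [ones])
    (fun i => by rw [barLetter_mem_column, mem_barred])

lemma card_eq (hs : IsSpColumn δ s) (hδ : ∀ i, δ i ≤ 1) :
    #s = 2 * #(barred s : Finset (Fin k)) + ∑ i, δ i := by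
  rw [sum_eq_card_ones hδ, ← card_column (disjoint_ones fun _ => hs.eq_zero_of_mem_barred),
    hs.column_barred]

lemma ballot_barred (hs : IsSpColumn δ s) (hδ : ∀ i, δ i ≤ 1) (m : Fin k) :
    #((barred s).filter (· ≤ m)) ≤ #((unmarked δ (barred s)).filter (· ≤ m)) :=
  (card_filter_column_le_iff hδ (fun _ => hs.eq_zero_of_mem_barred) m).1
    (by rw [hs.column_barred]; exact hs.card_filter_le m)

end IsSpColumn

def columnEquiv {a : ℕ} (hδ : ∀ i, δ i ≤ 1) (hle : ∑ i, δ i ≤ a) (heven : 2 ∣ a - ∑ i, δ i) :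
    {s : Finset ℕ // #s = a ∧ IsSpColumn δ s} ≃
      {S : Finset (Fin k) // (∀ i ∈ S, δ i = 0) ∧ #S = (a - ∑ i, δ i) / 2 ∧
        ∀ m, #(S.filter (· ≤ m)) ≤ #((unmarked δ S).filter (· ≤ m))} where
  toFun s := ⟨barred s.1, fun _ => s.2.2.eq_zero_of_mem_barred,
    by have := s.2.2.card_eq hδ; omega, s.2.2.ballot_barred hδ⟩
  invFun S := ⟨column S.1 (ones δ),
    by rw [card_column (disjoint_ones S.2.1), ← sum_eq_card_ones hδ]; omega,
    isSpColumn_column hδ S.2.1 S.2.2.2⟩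
  left_inv s := Subtype.ext s.2.2.column_barred
  right_inv S := Subtype.ext barred_column

lemma isTableau_iff_isSpColumn (hδ : ∀ i, δ i ≤ 1) {a : ℕ} {w : Fin a → ℕ}
    (hw : StrictMono w) :
    ((∀ t, 1 ≤ w t ∧ w t ≤ 2 * k) ∧
      (∀ i, 1 ≤ i → i ≤ k → ((List.ofFn w).countP (fun x => decide (x ≤ 2 * i))) ≤ i) ∧
      (∀ i p, 1 ≤ i → i ≤ k →
        (((List.ofFn w).take p).count (2 * i)) ≤ (((List.ofFn w).take p).count (2 * i - 1))) ∧
      (∀ i : Fin k,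
        (List.ofFn w).count (2 * (i : ℕ) + 1) = (List.ofFn w).count (2 * (i : ℕ) + 2) + δ i)) ↔
      IsSpColumn δ (univ.image w) := by
  simp only [List.count_ofFn_of_injective hw.injective,
    List.countP_ofFn_of_injective hw.injective, forall_one_le_le_iff_forall_fin]
  have hbounds : (∀ t, 1 ≤ w t ∧ w t ≤ 2 * k) ↔ ∀ v ∈ univ.image w, 1 ≤ v ∧ v ≤ 2 * k := by
    simp
  constructor
  · rintro ⟨hb, hcol, -, hwt⟩
    exact ⟨hbounds.1 hb, hcol, fun i => ((ite_eq_ite_add_iff (hδ i)).1 (hwt i)).1,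
      fun i => ((ite_eq_ite_add_iff (hδ i)).1 (hwt i)).2⟩
  · intro hs
    refine ⟨hbounds.2 hs.bounds, hs.card_filter_le, ?_,
      fun i => (ite_eq_ite_add_iff (hδ i)).2 ⟨hs.letter_mem_iff i, hs.eq_zero_of_barLetter_mem i⟩⟩
    intro n p h1 h2
    refine (List.pairwise_ofFn.2 fun _ _ h => hw h).count_take_le
      (show 2 * n - 1 < 2 * n by omega) (fun h => ?_) p
    have hl : letter (⟨n - 1, by omega⟩ : Fin k) = 2 * n - 1 := by
      simp only [letter_apply]; omega
    have hb : barLetter (⟨n - 1, by omega⟩ : Fin k) = 2 * n := by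
      simp only [barLetter_apply]; omega
    rw [← List.mem_toFinset, ← Fin.univ_image_def] at h ⊢
    rw [← hl]
    rw [← hb] at h
    exact (hs.letter_mem_iff _).2 (Or.inl h)

end SpColumn

open SpColumn

/-- The alphabet `1 < 1̄ < ⋯ < k < k̄` is encoded by `1 < 2 < ⋯ < 2k` (`i ↦ 2i - 1`,
`ī ↦ 2i`), a tableau by its strictly increasing column `w`, and a ballot sequence over `Z(δ)`
by the set `S` of its marked terms. -/
theorem one_column_spk_bijection_general (k a : ℕ)
    (δ : Fin k → ℕ) (hδ : ∀ i, δ i ≤ 1)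
    (hle : ∑ i, δ i ≤ a) (heven : 2 ∣ (a - ∑ i, δ i)) :
    Nonempty (
      {w : Fin a → ℕ //
        StrictMono w ∧
        (∀ t, 1 ≤ w t ∧ w t ≤ 2 * k) ∧
        (∀ i, 1 ≤ i → i ≤ k →
          ((List.ofFn w).countP (fun x => decide (x ≤ 2 * i))) ≤ i) ∧
        (∀ i p, 1 ≤ i → i ≤ k →
          (((List.ofFn w).take p).count (2 * i)) ≤
            (((List.ofFn w).take p).count (2 * i - 1))) ∧
        (∀ i : Fin k,
          (List.ofFn w).count (2 * (i : ℕ) + 1) =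
            (List.ofFn w).count (2 * (i : ℕ) + 2) + δ i)}
      ≃
      {S : Finset (Fin k) //
        (∀ i ∈ S, δ i = 0) ∧
        S.card = (a - ∑ i, δ i) / 2 ∧
        (∀ m : Fin k,
          (S.filter (fun i => i ≤ m)).card ≤
            ((Finset.univ.filter (fun i => δ i = 0 ∧ i ∉ S)).filter (fun i => i ≤ m)).card)}) :=
  ⟨(subtypeStrictMonoEquiv fun _ hw => isTableau_iff_isSpColumn hδ hw).trans
    (columnEquiv hδ hle heven)⟩

/-- Bijection between one-column `Sp_{2k}`-ballot tableaux and ballot sequences.  The alphabet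
`1 < 1̄ < ⋯ < k < k̄` is encoded by `1 < 2 < ⋯ < 2k` with `i ↦ 2i-1`, `ī ↦ 2i`.  A one-column
`Sp_{2k}`-ballot tableau of shape `(1^a)` and weight `δ ∈ {0,1}^k` is a strictly increasing
sequence of length `a` satisfying the symplectic column condition (at most `i` entries
`≤ ī = 2i`) and the ballot condition, with `δᵢ = #(i's) − #(ī's)`.  A
`((2k-a-|δ|)/2, (a-|δ|)/2)`-ballot sequence over `Z(δ) = {i : δᵢ = 0}` is the increasing
enumeration of `Z(δ)` with exactly `(a-|δ|)/2` terms marked (encoded by the marked subset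
`S ⊆ Z(δ)`), such that at every prefix the number of marked terms does not exceed the number
of unmarked terms.  These two sets are in bijection. -/
theorem one_column_spk_bijection (k a : ℕ) (ha : a ≤ k)
    (δ : Fin k → ℕ) (hδ : ∀ i, δ i ≤ 1)
    (hle : ∑ i, δ i ≤ a) (heven : 2 ∣ (a - ∑ i, δ i)) :
    Nonempty (
      {w : Fin a → ℕ //
        StrictMono w ∧
        (∀ t, 1 ≤ w t ∧ w t ≤ 2 * k) ∧
        (∀ i, 1 ≤ i → i ≤ k →
          ((List.ofFn w).countP (fun x => decide (x ≤ 2 * i))) ≤ i) ∧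
        (∀ i p, 1 ≤ i → i ≤ k →
          (((List.ofFn w).take p).count (2 * i)) ≤
            (((List.ofFn w).take p).count (2 * i - 1))) ∧
        (∀ i : Fin k,
          (List.ofFn w).count (2 * (i : ℕ) + 1) =
            (List.ofFn w).count (2 * (i : ℕ) + 2) + δ i)}
      ≃
      {S : Finset (Fin k) //
        (∀ i ∈ S, δ i = 0) ∧
        S.card = (a - ∑ i, δ i) / 2 ∧
        (∀ m : Fin k,
          (S.filter (fun i => i ≤ m)).card ≤
            ((Finset.univ.filter (fun i => δ i = 0 ∧ i ∉ S)).filter (fun i => i ≤ m)).card)}) :=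
  one_column_spk_bijection_general k a δ hδ hle heven
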